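/- arXiv:0801.2226 — 3 statements merged into one kernel-verified Lean document; each statement's English description precedes it below -/
import Mathlib

section
/- Every closed PGA term is derivably equal (using axioms PGA1–PGA4) to a term in canonical form, i.e., a term of the form P or P ; Q^ω where P and Q are closed PGA terms not containing the repetition operator. -/
/-! Induction on the term. Concatenation is handled by PGA1 and by PGA3, which lets a
repetition absorb everything to its right. For repetition, the unfolding law
`x^ω = x ; x^ω` (PGA2 with `x^2`, then PGA4) gives `P^ω = P ; P^ω`, and turns
`(P ; Q^ω)^ω` into `P ; Q^ω ; (P ; Q^ω)^ω`, whose tail is absorbed by `Q^ω`. -/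

/-- PGA terms: instruction constants, concatenation `;`, repetition `^ω`. -/
inductive PGA (I : Type) : Type
  | inst : I → PGA I
  | seq : PGA I → PGA I → PGA I
  | rep : PGA I → PGA I

namespace PGA

/-- `pow x n` denotes `x^(n+1)`. -/
def pow {I : Type} (x : PGA I) : ℕ → PGA I
  | 0 => x
  | n + 1 => x.seq (x.pow n)

/-- Derivable equality of PGA terms: the congruence generated by PGA1–PGA4. -/
inductive Eq {I : Type} : PGA I → PGA I → Prop
  | refl (x : PGA I) : Eq x x
  | symm {x y : PGA I} : Eq x y → Eq y x
  | trans {x y z : PGA I} : Eq x y → Eq y z → Eq x z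
  | seq_congr {x y x' y' : PGA I} : Eq x x' → Eq y y' → Eq (x.seq y) (x'.seq y')
  | rep_congr {x x' : PGA I} : Eq x x' → Eq x.rep x'.rep
  | pga1 (x y z : PGA I) : Eq ((x.seq y).seq z) (x.seq (y.seq z))
  | pga2 (x : PGA I) (n : ℕ) : Eq (x.pow n).rep x.rep
  | pga3 (x y : PGA I) : Eq (x.rep.seq y) x.rep
  | pga4 (x y : PGA I) : Eq (x.seq y).rep (x.seq (y.seq x).rep)

/-- A PGA term not containing the repetition operator. -/
def repFree {I : Type} : PGA I → Prop
  | inst _ => True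
  | seq x y => repFree x ∧ repFree y
  | rep _ => False

end PGA

namespace PGA

variable {I : Type}

theorem Eq.seq_congr_right (x : PGA I) {y y' : PGA I} (h : Eq y y') : Eq (x.seq y) (x.seq y') :=
  .seq_congr (.refl x) h

theorem Eq.seq_congr_left {x x' : PGA I} (h : Eq x x') (y : PGA I) : Eq (x.seq y) (x'.seq y) :=
  .seq_congr h (.refl y)

theorem Eq.rep_unfold (x : PGA I) : Eq x.rep (x.seq x.rep) :=
  ((pga2 x 1).symm.trans (pga4 x x)).trans (seq_congr_right x (pga2 x 1))

theorem Eq.seq_rep_seq (P Q y : PGA I) : Eq ((P.seq Q.rep).seq y) (P.seq Q.rep) :=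
  (pga1 P Q.rep y).trans (seq_congr_right P (pga3 Q y))

theorem Eq.rep_seq_rep (P Q : PGA I) : Eq (P.seq Q.rep).rep (P.seq Q.rep) :=
  (rep_unfold _).trans (seq_rep_seq P Q _)

def HasCanonicalForm (x : PGA I) : Prop :=
  (∃ P : PGA I, P.repFree ∧ Eq x P) ∨
    ∃ P Q : PGA I, P.repFree ∧ Q.repFree ∧ Eq x (P.seq Q.rep)

theorem hasCanonicalForm_inst (i : I) : HasCanonicalForm (inst i) :=
  .inl ⟨inst i, trivial, .refl _⟩

theorem HasCanonicalForm.seq {x y : PGA I} (hx : HasCanonicalForm x) (hy : HasCanonicalForm y) :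
    HasCanonicalForm (x.seq y) := by
  rcases hx with ⟨P, hP, hxP⟩ | ⟨P, Q, hP, hQ, hxPQ⟩
  · rcases hy with ⟨R, hR, hyR⟩ | ⟨R, S, hR, hS, hyRS⟩
    · exact .inl ⟨P.seq R, ⟨hP, hR⟩, .seq_congr hxP hyR⟩
    · exact .inr ⟨P.seq R, S, ⟨hP, hR⟩, hS,
        (Eq.seq_congr hxP hyRS).trans (Eq.pga1 P R S.rep).symm⟩
  · exact .inr ⟨P, Q, hP, hQ, (Eq.seq_congr_left hxPQ y).trans (Eq.seq_rep_seq P Q y)⟩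

theorem HasCanonicalForm.rep {x : PGA I} (hx : HasCanonicalForm x) :
    HasCanonicalForm x.rep := by
  rcases hx with ⟨P, hP, hxP⟩ | ⟨P, Q, hP, hQ, hxPQ⟩
  · exact .inr ⟨P, P, hP, hP, (Eq.rep_congr hxP).trans (Eq.rep_unfold P)⟩
  · exact .inr ⟨P, Q, hP, hQ, (Eq.rep_congr hxPQ).trans (Eq.rep_seq_rep P Q)⟩

end PGA

/-- Every closed PGA term is derivably equal to a term in canonical form:
either a repetition-free term `P`, or `P ; Q^ω` with `P`, `Q` repetition-free. -/
theorem pga_canonical_form {I : Type} (x : PGA I) :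
    (∃ P : PGA I, P.repFree ∧ PGA.Eq x P) ∨
    (∃ P Q : PGA I, P.repFree ∧ Q.repFree ∧ PGA.Eq x (P.seq Q.rep)) := by
  induction x with
  | inst i => exact PGA.hasCanonicalForm_inst i
  | seq a b iha ihb => exact PGA.HasCanonicalForm.seq iha ihb
  | rep a iha => exact PGA.HasCanonicalForm.rep iha
end

section
/- For any state-based service description (S, eff, yld, act) satisfying the three service-description conditions, each H_s (for s ∈ S) satisfies the three defining conditions on services; in particular: (1) if reply(H_s)(α ⌢ ⟨m⟩) = M for some α, then reply(H_s)(α' ⌢ ⟨m⟩) ∉ {T,F} for all α'; (2) if reply(H_s)(α) = B then reply(H_s)(α ⌢ ⟨m⟩) = B for all m; (3) reply(H_s)(α) ≠ M iff action(H_s)(α) = τ. -/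
/-- Possible replies of a service: true, false, no reply (`M`), blocked (`B`). -/
inductive Reply : Type
  | T | F | M | B

/-- The cumulative effect function: `ceff_s(⟨⟩) = s`,
`ceff_s(α ⌢ ⟨m⟩) = eff(m, ceff_s(α))`. -/
def ceff {Meth S : Type} (eff : Meth → S → S) (s : S) (α : List Meth) : S :=
  α.foldl (fun st m => eff m st) s

/-- Reply function of the service `H_s`: on a non-empty sequence `α ⌢ ⟨m⟩`
(encoded as a non-empty list) it is `yld(m, ceff_s(α))`; the value on the
empty list is irrelevant junk. -/
def HsReply {Meth S : Type} (eff : Meth → S → S) (yld : Meth → S → Reply)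
    (s : S) : List Meth → Reply
  | [] => Reply.B
  | (m :: rest) =>
      yld ((m :: rest).getLast (by simp)) (ceff eff s (m :: rest).dropLast)

/-- Action function of the service `H_s`. -/
def HsAction {Meth S Act : Type} (eff : Meth → S → S) (act : Meth → S → Act)
    (tau : Act) (s : S) : List Meth → Act
  | [] => tau
  | (m :: rest) =>
      act ((m :: rest).getLast (by simp)) (ceff eff s (m :: rest).dropLast)

section

variable {Meth S : Type} (eff : Meth → S → S) (s : S)

theorem ceff_append_singleton (α : List Meth) (m : Meth) :
    ceff eff s (α ++ [m]) = eff m (ceff eff s α) :=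
  List.foldl_concat ..

theorem HsReply_of_ne_nil (yld : Meth → S → Reply) {α : List Meth} (hα : α ≠ []) :
    HsReply eff yld s α = yld (α.getLast hα) (ceff eff s α.dropLast) := by
  cases α with
  | nil => contradiction
  | cons => rfl

theorem HsReply_append_singleton (yld : Meth → S → Reply) (α : List Meth) (m : Meth) :
    HsReply eff yld s (α ++ [m]) = yld m (ceff eff s α) := by
  simp [HsReply_of_ne_nil]

theorem HsAction_of_ne_nil {Act : Type} (act : Meth → S → Act) (tau : Act) {α : List Meth}
    (hα : α ≠ []) :
    HsAction eff act tau s α = act (α.getLast hα) (ceff eff s α.dropLast) := by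
  cases α with
  | nil => contradiction
  | cons => rfl

end

/-- If a state-based service description `(S, eff, yld, act)` satisfies the three
service-description conditions, then each `H_s` satisfies the three defining
conditions on services. -/
theorem state_service_is_service {Meth S Act : Type}
    (eff : Meth → S → S) (yld : Meth → S → Reply) (act : Meth → S → Act)
    (tau : Act)
    (cond1 : ∀ m : Meth, (∃ s : S, yld m s = Reply.M) →
      ∀ s' : S, yld m s' ≠ Reply.T ∧ yld m s' ≠ Reply.F)
    (cond2 : ∃ d : S, (∀ m : Meth, yld m d = Reply.B) ∧
      (∀ m : Meth, ∀ s' : S, yld m s' = Reply.B → eff m s' = d))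
    (cond3 : ∀ (m : Meth) (s : S), yld m s ≠ Reply.M ↔ act m s = tau)
    (s : S) :
    (∀ m : Meth, (∃ α : List Meth, HsReply eff yld s (α ++ [m]) = Reply.M) →
      ∀ α' : List Meth, HsReply eff yld s (α' ++ [m]) ≠ Reply.T ∧
        HsReply eff yld s (α' ++ [m]) ≠ Reply.F) ∧
    (∀ α : List Meth, α ≠ [] → HsReply eff yld s α = Reply.B →
      ∀ m : Meth, HsReply eff yld s (α ++ [m]) = Reply.B) ∧
    (∀ α : List Meth, α ≠ [] →
      (HsReply eff yld s α ≠ Reply.M ↔ HsAction eff act tau s α = tau)) := by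
  obtain ⟨d, hd_blocked, hd_absorbs⟩ := cond2
  refine ⟨?_, ?_, ?_⟩
  · rintro m ⟨α, hα⟩ α'
    rw [HsReply_append_singleton] at hα ⊢
    exact cond1 m ⟨_, hα⟩ _
  · intro α hα hB m
    obtain ⟨β, m', rfl⟩ := List.eq_nil_or_concat' α |>.resolve_left hα
    rw [HsReply_append_singleton] at hB
    rw [HsReply_append_singleton, ceff_append_singleton, hd_absorbs _ _ hB]
    exact hd_blocked m
  · intro α hα
    rw [HsReply_of_ne_nil eff s yld hα, HsAction_of_ne_nil eff s act tau hα]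
    exact cond3 _ _
end

section
/- The structural congruence relation on PGA programs is preserved by thread extraction on the generating defining clauses: for all n, and primitive instructions u₁,…,u_n, the thread extracted from #(n+1);u₁;…;u_n;#0 equals the thread extracted from #0;u₁;…;u_n;#0 (both equal D when followed by the same continuation), and the thread extracted from #(n+1);u₁;…;u_n;#m;x equals that of #(m+n+1);u₁;…;u_n;#m;x. -/
/-- Primitive instructions of PGA. -/
inductive PGAInstr (A : Type) : Type
  | basic (a : A)
  | ptst (a : A)
  | ntst (a : A)
  | fjmp (l : ℕ)
  | halt

/-! A jump `#(l+2)` over an instruction `u` behaves as `#(l+1)` on the rest, so a jump over the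
whole block `u₁;…;u_n` reduces, in `n` steps, to the jump `#(k+1)` with `k` what it exceeds the
block by. The first clause is then `|#1;#0| = |#0| = D`; in the second both sides land on the
instruction `#m`, one of them via `#1;#m;x` and the other via one further skip `#(m+1);#m;x`. -/

namespace PGAInstr

variable {A T : Type}

theorem ext_fjmp_append (ext : List (PGAInstr A) → T)
    (h_jmp : ∀ (l : ℕ) (u : PGAInstr A) (x : List (PGAInstr A)), x ≠ [] →
      ext (fjmp (l + 2) :: u :: x) = ext (fjmp (l + 1) :: x))
    (us y : List (PGAInstr A)) (hy : y ≠ []) (k : ℕ) :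
    ext (fjmp (k + us.length + 1) :: us ++ y) = ext (fjmp (k + 1) :: y) := by
  induction us with
  | nil => rfl
  | cons u us ih =>
    have hne : us ++ y ≠ [] := by simp [hy]
    calc ext (fjmp (k + (u :: us).length + 1) :: (u :: us) ++ y)
        = ext (fjmp (k + us.length + 2) :: u :: (us ++ y)) := by
          simp only [List.length_cons, List.cons_append, Nat.add_assoc]
      _ = ext (fjmp (k + us.length + 1) :: us ++ y) := h_jmp _ u _ hne
      _ = ext (fjmp (k + 1) :: y) := ih

theorem ext_fjmp_length_succ_append (ext : List (PGAInstr A) → T)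
    (h_jmp : ∀ (l : ℕ) (u : PGAInstr A) (x : List (PGAInstr A)), x ≠ [] →
      ext (fjmp (l + 2) :: u :: x) = ext (fjmp (l + 1) :: x))
    (h_jmpS : ∀ x : List (PGAInstr A), x ≠ [] → ext (fjmp 1 :: x) = ext x)
    (us y : List (PGAInstr A)) (hy : y ≠ []) :
    ext (fjmp (us.length + 1) :: us ++ y) = ext y := by
  simpa [h_jmpS y hy] using ext_fjmp_append ext h_jmp us y hy 0

theorem ext_fjmp_succ_cons_fjmp (D : T) (ext : List (PGAInstr A) → T)
    (h_jmp1 : ∀ l : ℕ, ext [fjmp l] = D)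
    (h_jmp2 : ∀ (l : ℕ) (u : PGAInstr A), ext [fjmp (l + 2), u] = D)
    (h_jmp : ∀ (l : ℕ) (u : PGAInstr A) (x : List (PGAInstr A)), x ≠ [] →
      ext (fjmp (l + 2) :: u :: x) = ext (fjmp (l + 1) :: x))
    (h_jmpS : ∀ x : List (PGAInstr A), x ≠ [] → ext (fjmp 1 :: x) = ext x)
    (m : ℕ) (x : List (PGAInstr A)) :
    ext (fjmp (m + 1) :: fjmp m :: x) = ext (fjmp m :: x) := by
  rcases m with _ | m
  · exact h_jmpS _ (List.cons_ne_nil _ _)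
  rcases x with _ | ⟨v, x⟩
  · rw [h_jmp2, h_jmp1]
  · exact h_jmp _ _ _ (List.cons_ne_nil _ _)

end PGAInstr

open PGAInstr in
theorem thread_extraction_respects_structural_congruence_general
    {A T : Type} (D : T)
    (ext : List (PGAInstr A) → T)
    (h_jmp1 : ∀ l : ℕ, ext [PGAInstr.fjmp l] = D)
    (h_jmp0 : ∀ x : List (PGAInstr A), x ≠ [] → ext (PGAInstr.fjmp 0 :: x) = D)
    (h_jmpS : ∀ x : List (PGAInstr A), x ≠ [] → ext (PGAInstr.fjmp 1 :: x) = ext x)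
    (h_jmp2 : ∀ (l : ℕ) (u : PGAInstr A), ext [PGAInstr.fjmp (l + 2), u] = D)
    (h_jmp : ∀ (l : ℕ) (u : PGAInstr A) (x : List (PGAInstr A)), x ≠ [] →
      ext (PGAInstr.fjmp (l + 2) :: u :: x) = ext (PGAInstr.fjmp (l + 1) :: x))
    (n : ℕ) (us : List (PGAInstr A)) (h_len : us.length = n) :
    (ext (PGAInstr.fjmp (n + 1) :: us ++ [PGAInstr.fjmp 0])
        = ext (PGAInstr.fjmp 0 :: us ++ [PGAInstr.fjmp 0]) ∧
      ext (PGAInstr.fjmp (n + 1) :: us ++ [PGAInstr.fjmp 0]) = D ∧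
      ext (PGAInstr.fjmp 0 :: us ++ [PGAInstr.fjmp 0]) = D) ∧
    (∀ (m : ℕ) (x : List (PGAInstr A)),
      ext (PGAInstr.fjmp (n + 1) :: us ++ (PGAInstr.fjmp m :: x))
        = ext (PGAInstr.fjmp (m + n + 1) :: us ++ (PGAInstr.fjmp m :: x))) := by
  subst h_len
  have skip_block := ext_fjmp_length_succ_append ext h_jmp h_jmpS us
  have hD : ext (fjmp (us.length + 1) :: us ++ [fjmp 0]) = D := by
    rw [skip_block _ (List.cons_ne_nil _ _), h_jmp1]
  have hD0 : ext (fjmp 0 :: us ++ [fjmp 0]) = D := h_jmp0 _ (by simp)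
  refine ⟨⟨hD.trans hD0.symm, hD, hD0⟩, fun m x => ?_⟩
  rw [skip_block _ (List.cons_ne_nil _ _), ext_fjmp_append ext h_jmp us _ (List.cons_ne_nil _ _),
    ext_fjmp_succ_cons_fjmp D ext h_jmp1 h_jmp2 h_jmp h_jmpS]

/-- In any thread model (`D` deadlock, `S` termination, `pcc` postconditional
composition), any thread extraction operator `ext` on instruction sequences
satisfying the defining equations of PGA thread extraction identifies the
generating pairs of the structural congruence:
`|#(n+1);u₁;…;u_n;#0| = |#0;u₁;…;u_n;#0|` (both equal `D`), and
`|#(n+1);u₁;…;u_n;#m;x| = |#(m+n+1);u₁;…;u_n;#m;x|`. -/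
theorem thread_extraction_respects_structural_congruence
    {A T : Type} (D S : T) (pcc : T → A → T → T)
    (ext : List (PGAInstr A) → T)
    (h_basic1 : ∀ a : A, ext [PGAInstr.basic a] = pcc D a D)
    (h_basic : ∀ (a : A) (x : List (PGAInstr A)), x ≠ [] →
      ext (PGAInstr.basic a :: x) = pcc (ext x) a (ext x))
    (h_ptst1 : ∀ a : A, ext [PGAInstr.ptst a] = pcc D a D)
    (h_ptst : ∀ (a : A) (x : List (PGAInstr A)), x ≠ [] →
      ext (PGAInstr.ptst a :: x) = pcc (ext x) a (ext (PGAInstr.fjmp 2 :: x)))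
    (h_ntst1 : ∀ a : A, ext [PGAInstr.ntst a] = pcc D a D)
    (h_ntst : ∀ (a : A) (x : List (PGAInstr A)), x ≠ [] →
      ext (PGAInstr.ntst a :: x) = pcc (ext (PGAInstr.fjmp 2 :: x)) a (ext x))
    (h_jmp1 : ∀ l : ℕ, ext [PGAInstr.fjmp l] = D)
    (h_jmp0 : ∀ x : List (PGAInstr A), x ≠ [] → ext (PGAInstr.fjmp 0 :: x) = D)
    (h_jmpS : ∀ x : List (PGAInstr A), x ≠ [] → ext (PGAInstr.fjmp 1 :: x) = ext x)
    (h_jmp2 : ∀ (l : ℕ) (u : PGAInstr A), ext [PGAInstr.fjmp (l + 2), u] = D)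
    (h_jmp : ∀ (l : ℕ) (u : PGAInstr A) (x : List (PGAInstr A)), x ≠ [] →
      ext (PGAInstr.fjmp (l + 2) :: u :: x) = ext (PGAInstr.fjmp (l + 1) :: x))
    (h_halt1 : ext [PGAInstr.halt] = S)
    (h_halt : ∀ x : List (PGAInstr A), x ≠ [] → ext (PGAInstr.halt :: x) = S)
    (n : ℕ) (us : List (PGAInstr A)) (h_len : us.length = n) :
    (ext (PGAInstr.fjmp (n + 1) :: us ++ [PGAInstr.fjmp 0])
        = ext (PGAInstr.fjmp 0 :: us ++ [PGAInstr.fjmp 0]) ∧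
      ext (PGAInstr.fjmp (n + 1) :: us ++ [PGAInstr.fjmp 0]) = D ∧
      ext (PGAInstr.fjmp 0 :: us ++ [PGAInstr.fjmp 0]) = D) ∧
    (∀ (m : ℕ) (x : List (PGAInstr A)),
      ext (PGAInstr.fjmp (n + 1) :: us ++ (PGAInstr.fjmp m :: x))
        = ext (PGAInstr.fjmp (m + n + 1) :: us ++ (PGAInstr.fjmp m :: x))) :=
  thread_extraction_respects_structural_congruence_general D ext h_jmp1 h_jmp0 h_jmpS h_jmp2 h_jmp n
    us h_len
end
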